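/- arXiv:1901.01464 — 3 statements merged into one kernel-verified Lean document; each statement's English description precedes it below -/
import Mathlib

section
/- Let 0 < c < 1/4 and let a : ℕ × ℕ → ℝ be a nonnegative double sequence satisfying a(0,0) ≤ 1, a(0,l) ≤ c^l for all l, a(k,0) ≤ c^k for all k, and a(k,l) ≤ c·(a(k-1,l) + a(k,l-1)) + 2c·a(k-1,l-1) for all k,l ≥ 1. Then a(k,l) ≤ (4c)^(max(k,l)) for all k,l ≥ 0. -/
/-! The three predecessors of `(k+1, l+1)` all have index maximum at least `m = max k l`, so by
induction (and `4c ≤ 1`) each is at most `(4c)^m`; the recursion then multiplies this bound by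
`c + c + 2c = 4c`. -/

theorem le_pow_max_of_le_mul_add {c : ℝ} (hc0 : 0 ≤ c) (hc : 4 * c ≤ 1) {a : ℕ × ℕ → ℝ}
    (h0l : ∀ l, a (0, l) ≤ (4 * c) ^ l) (hk0 : ∀ k, a (k, 0) ≤ (4 * c) ^ k)
    (hrec : ∀ k l, a (k + 1, l + 1) ≤ c * (a (k, l + 1) + a (k + 1, l)) + 2 * c * a (k, l)) :
    ∀ k l, a (k, l) ≤ (4 * c) ^ max k l := by
  intro k
  induction k with
  | zero => intro l; simpa using h0l l
  | succ k ihk =>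
    intro l
    induction l with
    | zero => simpa using hk0 (k + 1)
    | succ l ihl =>
      set m := max k l
      have hr : 0 ≤ 4 * c := by positivity
      have le_of_max_ge {i j : ℕ} (hij : m ≤ max i j) (h : a (i, j) ≤ (4 * c) ^ max i j) :
          a (i, j) ≤ (4 * c) ^ m :=
        h.trans (pow_le_pow_of_le_one hr hc hij)
      have h1 := le_of_max_ge (by omega) (ihk (l + 1))
      have h2 := le_of_max_ge (by omega) ihl
      have h3 := le_of_max_ge le_rfl (ihk l)
      calc a (k + 1, l + 1) ≤ c * (a (k, l + 1) + a (k + 1, l)) + 2 * c * a (k, l) := hrec k l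
        _ ≤ c * ((4 * c) ^ m + (4 * c) ^ m) + 2 * c * (4 * c) ^ m := by gcongr
        _ = (4 * c) ^ max (k + 1) (l + 1) := by rw [Nat.succ_max_succ, pow_succ]; ring

theorem stmt_1_general (c : ℝ) (hc0 : 0 < c) (hc : c < 1/4) (a : ℕ × ℕ → ℝ)
    (h0l : ∀ l, a (0, l) ≤ c ^ l)
    (hk0 : ∀ k, a (k, 0) ≤ c ^ k)
    (hrec : ∀ k l, 1 ≤ k → 1 ≤ l →
      a (k, l) ≤ c * (a (k - 1, l) + a (k, l - 1)) + 2 * c * a (k - 1, l - 1)) :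
    ∀ k l, a (k, l) ≤ (4 * c) ^ (max k l) := by
  have hc4 : c ≤ 4 * c := by linarith
  refine le_pow_max_of_le_mul_add hc0.le (by linarith) ?_ ?_ ?_
  · exact fun l => (h0l l).trans (pow_le_pow_left₀ hc0.le hc4 l)
  · exact fun k => (hk0 k).trans (pow_le_pow_left₀ hc0.le hc4 k)
  · intro k l
    simpa using hrec (k + 1) (l + 1) (by omega) (by omega)

theorem stmt_1 (c : ℝ) (hc0 : 0 < c) (hc : c < 1/4) (a : ℕ × ℕ → ℝ)
    (hnn : ∀ k l, 0 ≤ a (k, l))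
    (h00 : a (0, 0) ≤ 1)
    (h0l : ∀ l, a (0, l) ≤ c ^ l)
    (hk0 : ∀ k, a (k, 0) ≤ c ^ k)
    (hrec : ∀ k l, 1 ≤ k → 1 ≤ l →
      a (k, l) ≤ c * (a (k - 1, l) + a (k, l - 1)) + 2 * c * a (k - 1, l - 1)) :
    ∀ k l, a (k, l) ≤ (4 * c) ^ (max k l) :=
  stmt_1_general c hc0 hc a h0l hk0 hrec
end

section
/- Let (a_{k,l})_{k,l≥0} be nonnegative reals with a_{0,0} ≤ M/(1-β), a_{k,0} ≤ (2β/(1-β))^k·M/(1-β), a_{0,l} ≤ (2β/(1-β))^l·M/(1-β), and a_{k,l} ≤ (2β/(1-β))·(a_{k-1,l} + a_{k,l-1}) + (4β/(1-β))·a_{k-1,l-1} for all k,l ≥ 1, where M > 0 and 0 < β < 1/9. Then a_{k,l} ≤ (8β/(1-β))^(max(k,l))·(M/(1-β)) for all k,l ≥ 0. -/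
/-! Write `ρ = 4c`. Since `ρ ≤ 1`, the bound `ρ ^ max k l * B` only decreases when `k` or `l` grows,
so each of the three predecessors of `(k + 1, l + 1)` is bounded by `ρ ^ m * B` with `m = max k l`,
and the recursion gives `2c · ρ ^ m B + 2c · ρ ^ m B = ρ ^ (m + 1) B`. For the theorem,
`c = 2β / (1 - β)`, and `β < 1/9` is exactly `4c < 1`. -/

theorem le_four_mul_pow_max_mul_of_recursion {c B : ℝ} (hc : 0 ≤ c) (hc4 : 4 * c ≤ 1)
    (hB : 0 ≤ B) {a : ℕ × ℕ → ℝ}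
    (hk0 : ∀ k, a (k, 0) ≤ c ^ k * B) (h0l : ∀ l, a (0, l) ≤ c ^ l * B)
    (hrec : ∀ k l, a (k + 1, l + 1) ≤ c * (a (k, l + 1) + a (k + 1, l)) + 2 * c * a (k, l)) :
    ∀ k l, a (k, l) ≤ (4 * c) ^ max k l * B := by
  have hbound : Antitone fun n : ℕ => (4 * c) ^ n * B := fun m n hmn =>
    mul_le_mul_of_nonneg_right (pow_le_pow_of_le_one (by positivity) hc4 hmn) hB
  have hboundary (n : ℕ) : c ^ n * B ≤ (4 * c) ^ n * B := by gcongr; linarith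
  intro k
  induction k with
  | zero => intro l; simpa using (h0l l).trans (hboundary l)
  | succ k ihk =>
    intro l
    induction l with
    | zero => simpa using (hk0 (k + 1)).trans (hboundary (k + 1))
    | succ l ihl =>
      set m := max k l
      have hleft : a (k, l + 1) ≤ (4 * c) ^ m * B :=
        (ihk (l + 1)).trans (hbound (by omega))
      have hdown : a (k + 1, l) ≤ (4 * c) ^ m * B := ihl.trans (hbound (by omega))
      calc a (k + 1, l + 1) ≤ c * (a (k, l + 1) + a (k + 1, l)) + 2 * c * a (k, l) := hrec k l
        _ ≤ c * ((4 * c) ^ m * B + (4 * c) ^ m * B) + 2 * c * ((4 * c) ^ m * B) := by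
          gcongr; exact ihk l
        _ = (4 * c) ^ max (k + 1) (l + 1) * B := by
          rw [Nat.succ_max_succ, pow_succ]; ring

theorem stmt_7_general (M β : ℝ) (hM : 0 < M) (hβ0 : 0 < β) (hβ1 : β < 1/9)
    (a : ℕ × ℕ → ℝ)
    (hk0 : ∀ k, a (k, 0) ≤ (2 * β / (1 - β)) ^ k * (M / (1 - β)))
    (h0l : ∀ l, a (0, l) ≤ (2 * β / (1 - β)) ^ l * (M / (1 - β)))
    (hrec : ∀ k l, 1 ≤ k → 1 ≤ l →
      a (k, l) ≤ (2 * β / (1 - β)) * (a (k - 1, l) + a (k, l - 1))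
        + (4 * β / (1 - β)) * a (k - 1, l - 1)) :
    ∀ k l, a (k, l) ≤ (8 * β / (1 - β)) ^ (max k l) * (M / (1 - β)) := by
  have h1β : 0 < 1 - β := by linarith
  have hc4 : 4 * (2 * β / (1 - β)) ≤ 1 := by
    rw [mul_div_assoc', div_le_one h1β]; linarith
  have hrec' (k l : ℕ) := by
    simpa only [Nat.add_sub_cancel] using hrec (k + 1) (l + 1) (by omega) (by omega)
  have key := le_four_mul_pow_max_mul_of_recursion (by positivity) hc4 (by positivity) hk0 h0l
    fun k l => (hrec' k l).trans_eq (by ring)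
  intro k l
  simpa only [← mul_div_assoc, ← mul_assoc, show (4 : ℝ) * 2 = 8 by norm_num] using key k l

theorem stmt_7 (M β : ℝ) (hM : 0 < M) (hβ0 : 0 < β) (hβ1 : β < 1/9)
    (a : ℕ × ℕ → ℝ) (hnn : ∀ k l, 0 ≤ a (k, l))
    (h00 : a (0, 0) ≤ M / (1 - β))
    (hk0 : ∀ k, a (k, 0) ≤ (2 * β / (1 - β)) ^ k * (M / (1 - β)))
    (h0l : ∀ l, a (0, l) ≤ (2 * β / (1 - β)) ^ l * (M / (1 - β)))
    (hrec : ∀ k l, 1 ≤ k → 1 ≤ l →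
      a (k, l) ≤ (2 * β / (1 - β)) * (a (k - 1, l) + a (k, l - 1))
        + (4 * β / (1 - β)) * a (k - 1, l - 1)) :
    ∀ k l, a (k, l) ≤ (8 * β / (1 - β)) ^ (max k l) * (M / (1 - β)) :=
  stmt_7_general M β hM hβ0 hβ1 a hk0 h0l hrec
end

section
/- Let S be a finite set, β ∈ [0,1), and for each policy δ in a set Π let P_δ be a row-stochastic matrix on S and R_δ : S → ℝ a reward with ‖R_δ‖ ≤ M. Let v_δ be the unique fixed point of v = R_δ + β P_δ v. Then for any δ, δ' ∈ Π: ‖v_δ − v_δ'‖ ≤ (1/(1-β))·‖R_δ − R_δ'‖ + (βM/(1-β)²)·‖P_δ − P_δ'‖. -/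
/-!
Write `v - v' = (R - R') + β P (v - v') + β (P - P') v'`. A stochastic `P` is a sup-norm
contraction and `‖(P - P') v'‖ ≤ N ‖v'‖`, so `(1 - β) ‖v - v'‖ ≤ ‖R - R'‖ + β N ‖v'‖`;
the same contraction argument applied to `v' = R' + β P' v'` gives `‖v'‖ ≤ M / (1 - β)`.
-/

open Finset

section

variable {S : Type*} [Fintype S]

lemma abs_sum_mul_le_sum_abs_mul_norm (q w : S → ℝ) :
    |∑ j, q j * w j| ≤ (∑ j, |q j|) * ‖w‖ :=
  calc |∑ j, q j * w j| ≤ ∑ j, |q j| * |w j| := by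
        simpa only [abs_mul] using abs_sum_le_sum_abs (fun j => q j * w j) univ
    _ ≤ ∑ j, |q j| * ‖w‖ := by gcongr with j; exact norm_le_pi_norm w j
    _ = (∑ j, |q j|) * ‖w‖ := (sum_mul ..).symm

lemma abs_sum_mul_le_norm_of_stochastic {q : S → ℝ} (hq : ∀ j, 0 ≤ q j)
    (hq_sum : ∑ j, q j = 1) (w : S → ℝ) : |∑ j, q j * w j| ≤ ‖w‖ := by
  simpa only [abs_of_nonneg (hq _), hq_sum, one_mul] using abs_sum_mul_le_sum_abs_mul_norm q w

lemma norm_le_div_one_sub_of_forall_abs_le {x : S → ℝ} {a β : ℝ} (ha : 0 ≤ a) (hβ0 : 0 ≤ β)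
    (hβ1 : β < 1) (h : ∀ i, |x i| ≤ a + β * ‖x‖) : ‖x‖ ≤ a / (1 - β) := by
  have hx : ‖x‖ ≤ a + β * ‖x‖ := (pi_norm_le_iff_of_nonneg (by positivity)).2 h
  rw [le_div_iff₀ (by linarith)]
  linarith

lemma norm_le_norm_div_one_sub_of_bellman {β : ℝ} (hβ0 : 0 ≤ β) (hβ1 : β < 1)
    {P : S → S → ℝ} (hP : ∀ i j, 0 ≤ P i j) (hP_row : ∀ i, ∑ j, P i j = 1) {R v : S → ℝ}
    (hv : ∀ i, v i = R i + β * ∑ j, P i j * v j) : ‖v‖ ≤ ‖R‖ / (1 - β) := by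
  refine norm_le_div_one_sub_of_forall_abs_le (norm_nonneg R) hβ0 hβ1 fun i => ?_
  calc |v i| ≤ |R i| + β * |∑ j, P i j * v j| := by
        rw [hv i]
        exact (abs_add_le _ _).trans_eq (by rw [abs_mul, abs_of_nonneg hβ0])
    _ ≤ ‖R‖ + β * ‖v‖ := by
        gcongr
        · exact norm_le_pi_norm R i
        · exact abs_sum_mul_le_norm_of_stochastic (hP i) (hP_row i) v

lemma norm_sub_le_of_bellman {β N : ℝ} (hβ0 : 0 ≤ β) (hβ1 : β < 1) (hN0 : 0 ≤ N)
    {P P' : S → S → ℝ} (hP : ∀ i j, 0 ≤ P i j) (hP_row : ∀ i, ∑ j, P i j = 1)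
    (hN : ∀ i, ∑ j, |P i j - P' i j| ≤ N) {R R' v v' : S → ℝ}
    (hv : ∀ i, v i = R i + β * ∑ j, P i j * v j)
    (hv' : ∀ i, v' i = R' i + β * ∑ j, P' i j * v' j) :
    ‖v - v'‖ ≤ (‖R - R'‖ + β * N * ‖v'‖) / (1 - β) := by
  refine norm_le_div_one_sub_of_forall_abs_le (by positivity) hβ0 hβ1 fun i => ?_
  have hdecomp : (v - v') i = (R - R') i + β * ∑ j, P i j * (v - v') j
      + β * ∑ j, (P i j - P' i j) * v' j := by
    simp only [Pi.sub_apply, hv i, hv' i, mul_sub, sub_mul, sum_sub_distrib]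
    ring
  calc |(v - v') i| ≤ |(R - R') i| + β * |∑ j, P i j * (v - v') j|
        + β * |∑ j, (P i j - P' i j) * v' j| := by
        rw [hdecomp]
        exact (abs_add_three _ _ _).trans_eq (by rw [abs_mul, abs_mul, abs_of_nonneg hβ0])
    _ ≤ ‖R - R'‖ + β * ‖v - v'‖ + β * (N * ‖v'‖) := by
        gcongr
        · exact norm_le_pi_norm (R - R') i
        · exact abs_sum_mul_le_norm_of_stochastic (hP i) (hP_row i) _
        · exact (abs_sum_mul_le_sum_abs_mul_norm _ v').trans (by gcongr; exact hN i)
    _ = ‖R - R'‖ + β * N * ‖v'‖ + β * ‖v - v'‖ := by ring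

end

theorem stmt_12_general {S : Type*} [Fintype S] [Nonempty S]
    (β M : ℝ) (hβ0 : 0 ≤ β) (hβ1 : β < 1)
    (P P' : S → S → ℝ)
    (hPnn : ∀ i j, 0 ≤ P i j) (hProw : ∀ i, ∑ j, P i j = 1)
    (hP'nn : ∀ i j, 0 ≤ P' i j) (hP'row : ∀ i, ∑ j, P' i j = 1)
    (R R' : S → ℝ) (hR' : ‖R'‖ ≤ M)
    (v v' : S → ℝ)
    (hv : ∀ i, v i = R i + β * ∑ j, P i j * v j)
    (hv' : ∀ i, v' i = R' i + β * ∑ j, P' i j * v' j)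
    (N : ℝ) (hN : N = Finset.univ.sup' Finset.univ_nonempty
      (fun i => ∑ j, |P i j - P' i j|)) :
    ‖v - v'‖ ≤ (1 / (1 - β)) * ‖R - R'‖ + (β * M / (1 - β) ^ 2) * N := by
  have hβ : 0 < 1 - β := by linarith
  have hN_row : ∀ i, ∑ j, |P i j - P' i j| ≤ N := fun i =>
    hN ▸ le_sup' (fun i => ∑ j, |P i j - P' i j|) (mem_univ i)
  have hN0 : 0 ≤ N := (sum_nonneg fun _ _ => abs_nonneg _).trans (hN_row (Classical.arbitrary S))
  have hv'_le : ‖v'‖ ≤ M / (1 - β) :=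
    (norm_le_norm_div_one_sub_of_bellman hβ0 hβ1 hP'nn hP'row hv').trans (by gcongr)
  calc ‖v - v'‖ ≤ (‖R - R'‖ + β * N * ‖v'‖) / (1 - β) :=
        norm_sub_le_of_bellman hβ0 hβ1 hN0 hPnn hProw hN_row hv hv'
    _ ≤ (‖R - R'‖ + β * N * (M / (1 - β))) / (1 - β) := by gcongr
    _ = (1 / (1 - β)) * ‖R - R'‖ + (β * M / (1 - β) ^ 2) * N := by field_simp

theorem stmt_12 {S : Type*} [Fintype S] [Nonempty S]
    (β M : ℝ) (hβ0 : 0 ≤ β) (hβ1 : β < 1) (hM : 0 < M)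
    (P P' : S → S → ℝ)
    (hPnn : ∀ i j, 0 ≤ P i j) (hProw : ∀ i, ∑ j, P i j = 1)
    (hP'nn : ∀ i j, 0 ≤ P' i j) (hP'row : ∀ i, ∑ j, P' i j = 1)
    (R R' : S → ℝ) (hR : ‖R‖ ≤ M) (hR' : ‖R'‖ ≤ M)
    (v v' : S → ℝ)
    (hv : ∀ i, v i = R i + β * ∑ j, P i j * v j)
    (hv' : ∀ i, v' i = R' i + β * ∑ j, P' i j * v' j)
    (N : ℝ) (hN : N = Finset.univ.sup' Finset.univ_nonempty
      (fun i => ∑ j, |P i j - P' i j|)) :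
    ‖v - v'‖ ≤ (1 / (1 - β)) * ‖R - R'‖ + (β * M / (1 - β) ^ 2) * N :=
  stmt_12_general β M hβ0 hβ1 P P' hPnn hProw hP'nn hP'row R R' hR' v v' hv hv' N hN
end
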